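/- arXiv:1206.0802 — 2 statements merged into one kernel-verified Lean document; each statement's English description precedes it below -/
import Mathlib

section
/- Let (Y,d) be a compact metric space and g : Y → Y a continuous surjection satisfying Axioms 1 and 2 with constants β > 0, integer K ≥ 1 and 0 < γ < 1. Then the inverse limit system (Ŷ, d̂, ĝ) has totally disconnected local stable sets: there exists ε̂ > 0 such that for every y ∈ Ŷ and every 0 < ε ≤ ε̂, the local stable set Ŷ^s(y, ε) = {z ∈ Ŷ : d̂(ĝ^n(y), ĝ^n(z)) ≤ ε for all n ≥ 0} is totally disconnected. -/
open Metric Function Topology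

variable {Y : Type*} [MetricSpace Y] [CompactSpace Y]

/-- The stationary inverse limit of `g : Y → Y`. -/
abbrev InvLim (g : Y → Y) : Type _ :=
  {y : ℕ → Y // ∀ n : ℕ, y n = g (y (n + 1))}

/-- The induced map `ĝ` on the inverse limit. -/
def ghat (g : Y → Y) (y : InvLim g) : InvLim g :=
  ⟨fun n => g (y.1 n), fun n => congrArg g (y.2 n)⟩

/-- The inverse `ĝ⁻¹` of the induced map on the inverse limit. -/
def ghatInv (g : Y → Y) (y : InvLim g) : InvLim g :=
  ⟨fun n => y.1 (n + 1), fun n => y.2 (n + 1)⟩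

/-- `d'(x,y) = sup_n γ^n d(x_n, y_n)`. -/
noncomputable def dp (g : Y → Y) (γ : ℝ) (x y : InvLim g) : ℝ :=
  ⨆ n : ℕ, γ ^ n * dist (x.1 n) (y.1 n)

/-- `d̂(x,y) = ∑_{k=0}^{K-1} γ^{-k} d'(ĝ^{-k} x, ĝ^{-k} y)`. -/
noncomputable def dhat (g : Y → Y) (γ : ℝ) (K : ℕ) (x y : InvLim g) : ℝ :=
  ∑ k ∈ Finset.range K, (γ ^ k)⁻¹ * dp g γ ((ghatInv g)^[k] x) ((ghatInv g)^[k] y)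

/-- Axiom 1: `d(x,y) ≤ β` implies `d(g^K x, g^K y) ≤ γ^K d(g^{2K} x, g^{2K} y)`. -/
def axiom1 (g : Y → Y) (β : ℝ) (K : ℕ) (γ : ℝ) : Prop :=
  ∀ x y : Y, dist x y ≤ β →
    dist (g^[K] x) (g^[K] y) ≤ γ ^ K * dist (g^[2 * K] x) (g^[2 * K] y)

/-- Axiom 2: `g^K(B(g^K x, ε)) ⊆ g^{2K}(B(x, γ ε))` for `0 < ε ≤ β`. -/
def axiom2 (g : Y → Y) (β : ℝ) (K : ℕ) (γ : ℝ) : Prop :=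
  ∀ x : Y, ∀ ε : ℝ, 0 < ε → ε ≤ β →
    g^[K] '' Metric.closedBall (g^[K] x) ε ⊆ g^[2 * K] '' Metric.closedBall x (γ * ε)

/-- The local stable set `Ŷ^s(x, ε)` in the inverse limit. -/
def Shat (g : Y → Y) (γ : ℝ) (K : ℕ) (x : InvLim g) (ε : ℝ) : Set (InvLim g) :=
  {y | ∀ n : ℕ, dhat g γ K ((ghat g)^[n] x) ((ghat g)^[n] y) ≤ ε}

/-- The local unstable set `Ŷ^u(x, ε)` in the inverse limit. -/
def Uhat (g : Y → Y) (γ : ℝ) (K : ℕ) (x : InvLim g) (ε : ℝ) : Set (InvLim g) :=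
  {y | ∀ n : ℕ, dhat g γ K ((ghatInv g)^[n] x) ((ghatInv g)^[n] y) ≤ ε}

/-!
Let `t` be a preconnected subset of a local stable set of size `ε ≤ β / 2`. The zeroth
coordinates of two points of `t` have forward orbits staying `β`-close, and iterating Axiom 1
along these orbits contracts their `g^K`-images to a single point. Axiom 1 also says that on a
set where `g^{2K}` is constant, `g^K` is constant on `β`-close pairs, hence on the whole set if it
is preconnected. Since the `j`-th coordinate projection of `t` is the `g^K`-image of the
preconnected `(j + K)`-th one, every coordinate projection of `t` is a single point, by induction
on `j`; so `t` is a subsingleton.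
-/

open Filter

section InverseLimit

variable {X : Type*} {g : X → X}

lemma InvLim.iterate_coord_add (f : InvLim g) (m j : ℕ) : g^[m] (f.1 (j + m)) = f.1 j := by
  induction m generalizing j with
  | zero => rfl
  | succ m ih =>
    rw [Function.iterate_succ_apply', show j + (m + 1) = j + 1 + m by omega, ih]
    exact (f.2 j).symm

lemma InvLim.iterate_image_coord (t : Set (InvLim g)) (m j : ℕ) :
    g^[m] '' ((fun f : InvLim g => f.1 (j + m)) '' t) = (fun f : InvLim g => f.1 j) '' t := by
  simp only [Set.image_image, InvLim.iterate_coord_add]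

lemma ghat_iterate_coord (s : ℕ) (z : InvLim g) (n : ℕ) :
    ((ghat g)^[s] z).1 n = g^[s] (z.1 n) := by
  induction s with
  | zero => rfl
  | succ s ih => rw [Function.iterate_succ_apply', Function.iterate_succ_apply', ← ih]; rfl

end InverseLimit

section Axiom1

variable {X : Type*} [MetricSpace X] {g : X → X} {β γ : ℝ} {K : ℕ}

lemma axiom1.dist_iterate_add_le (h1 : axiom1 g β K γ) {u v : X} {m : ℕ}
    (h : dist (g^[m] u) (g^[m] v) ≤ β) :
    dist (g^[K + m] u) (g^[K + m] v) ≤ γ ^ K * dist (g^[K + (K + m)] u) (g^[K + (K + m)] v) := by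
  simpa only [← Function.iterate_add_apply, two_mul, add_assoc] using h1 _ _ h

lemma axiom1.iterate_eq_of_forall_dist_iterate_le (h1 : axiom1 g β K γ) (hγ0 : 0 ≤ γ)
    (hγ1 : γ < 1) (hK : 0 < K) {u v : X} (h : ∀ s, dist (g^[s] u) (g^[s] v) ≤ β) :
    g^[K] u = g^[K] v := by
  have hdecay : ∀ r m, dist (g^[K + m] u) (g^[K + m] v) ≤ (γ ^ K) ^ r * β := by
    intro r
    induction r with
    | zero => intro m; simpa using h (K + m)
    | succ r ih =>
      intro m
      calc dist (g^[K + m] u) (g^[K + m] v)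
          ≤ γ ^ K * dist (g^[K + (K + m)] u) (g^[K + (K + m)] v) := h1.dist_iterate_add_le (h m)
        _ ≤ γ ^ K * ((γ ^ K) ^ r * β) := by gcongr; exact ih _
        _ = (γ ^ K) ^ (r + 1) * β := by ring
  have hlim : Tendsto (fun r : ℕ => (γ ^ K) ^ r * β) atTop (𝓝 0) := by
    simpa using (tendsto_pow_atTop_nhds_zero_of_lt_one (pow_nonneg hγ0 K)
      (pow_lt_one₀ hγ0 hγ1 hK.ne')).mul_const β
  exact dist_le_zero.1 (ge_of_tendsto' hlim fun r => by simpa using hdecay r 0)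

lemma axiom1.subsingleton_image_of_isPreconnected (h1 : axiom1 g β K γ) (hβ : 0 < β)
    {D : Set X} (hD : IsPreconnected D) (h2K : (g^[2 * K] '' D).Subsingleton) :
    (g^[K] '' D).Subsingleton := by
  rintro _ ⟨u, hu, rfl⟩ _ ⟨v, hv, rfl⟩
  refine hD.induction₂ (fun u v => g^[K] u = g^[K] v) (fun u hu => ?_)
    (fun _ _ _ _ _ _ => Eq.trans) (fun _ _ _ _ => Eq.symm) hu hv
  filter_upwards [mem_nhdsWithin_of_mem_nhds (ball_mem_nhds u hβ), self_mem_nhdsWithin]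
    with v hv hvD
  have h2Kuv := h2K (Set.mem_image_of_mem _ hu) (Set.mem_image_of_mem _ hvD)
  have := h1 u v (mem_ball'.1 hv).le
  rw [h2Kuv, dist_self, mul_zero] at this
  exact dist_le_zero.1 this

theorem InvLim.subsingleton_of_isPreconnected (h1 : axiom1 g β K γ) (hβ : 0 < β) (hK : 0 < K)
    {t : Set (InvLim g)} (ht : IsPreconnected t)
    (h0 : (g^[K] '' ((fun f : InvLim g => f.1 0) '' t)).Subsingleton) : t.Subsingleton := by
  set C : ℕ → Set X := fun j => (fun f : InvLim g => f.1 j) '' t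
  have hC : ∀ m j, g^[m] '' C (j + m) = C j := InvLim.iterate_image_coord t
  have hstep : ∀ j, (g^[K] '' C j).Subsingleton → (C j).Subsingleton := by
    intro j hj
    rw [← hC K j] at hj ⊢
    refine h1.subsingleton_image_of_isPreconnected hβ
      (ht.image _ ((continuous_apply _).comp continuous_subtype_val).continuousOn) ?_
    rwa [two_mul, Function.iterate_add, Set.image_comp]
  have hcoord : ∀ j, (C j).Subsingleton := by
    intro j
    induction j with
    | zero => exact hstep 0 h0
    | succ j ih =>
      apply hstep
      rw [← Nat.sub_add_cancel hK, Function.iterate_add, Set.image_comp, hC 1 j]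
      exact ih.image _
  exact fun x hx x' hx' =>
    Subtype.ext (funext fun j => hcoord j (Set.mem_image_of_mem _ hx) (Set.mem_image_of_mem _ hx'))

end Axiom1

section StableSets

variable {X : Type*} [MetricSpace X] {g : X → X} {γ : ℝ} {K : ℕ}

lemma dp_nonneg (hγ : 0 ≤ γ) (x y : InvLim g) : 0 ≤ dp g γ x y :=
  Real.iSup_nonneg fun n => mul_nonneg (pow_nonneg hγ n) dist_nonneg

lemma dist_coord_zero_le_dp [BoundedSpace X] (hγ0 : 0 ≤ γ) (hγ1 : γ ≤ 1) (x y : InvLim g) :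
    dist (x.1 0) (y.1 0) ≤ dp g γ x y := by
  obtain ⟨C, hC⟩ := isBounded_iff.1 (Bornology.IsBounded.all (Set.univ : Set X))
  have hbdd : BddAbove (Set.range fun n : ℕ => γ ^ n * dist (x.1 n) (y.1 n)) := by
    refine ⟨C, ?_⟩
    rintro _ ⟨n, rfl⟩
    exact (mul_le_of_le_one_left dist_nonneg (pow_le_one₀ hγ0 hγ1)).trans
      (hC (Set.mem_univ _) (Set.mem_univ _))
  simpa [dp] using le_ciSup hbdd 0

lemma dist_coord_zero_le_dhat [BoundedSpace X] (hγ0 : 0 ≤ γ) (hγ1 : γ ≤ 1) (hK : 0 < K)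
    (x y : InvLim g) : dist (x.1 0) (y.1 0) ≤ dhat g γ K x y :=
  calc dist (x.1 0) (y.1 0) ≤ dp g γ x y := dist_coord_zero_le_dp hγ0 hγ1 x y
    _ = (γ ^ 0)⁻¹ * dp g γ ((ghatInv g)^[0] x) ((ghatInv g)^[0] y) := by simp
    _ ≤ dhat g γ K x y :=
      Finset.single_le_sum (f := fun k => (γ ^ k)⁻¹ * dp g γ ((ghatInv g)^[k] x) ((ghatInv g)^[k] y))
        (fun k _ => mul_nonneg (inv_nonneg.2 (pow_nonneg hγ0 k)) (dp_nonneg hγ0 _ _))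
        (Finset.mem_range.2 hK)

lemma dist_iterate_coord_zero_le_of_mem_Shat [BoundedSpace X] (hγ0 : 0 ≤ γ) (hγ1 : γ ≤ 1)
    (hK : 0 < K) {y f : InvLim g} {ε : ℝ} (hf : f ∈ Shat g γ K y ε) (s : ℕ) :
    dist (g^[s] (y.1 0)) (g^[s] (f.1 0)) ≤ ε := by
  simpa only [ghat_iterate_coord] using (dist_coord_zero_le_dhat hγ0 hγ1 hK _ _).trans (hf s)

lemma axiom1.iterate_coord_zero_eq_of_mem_Shat [BoundedSpace X] {β : ℝ}
    (h1 : axiom1 g β K γ) (hγ0 : 0 ≤ γ) (hγ1 : γ < 1) (hK : 0 < K) {y f f' : InvLim g} {ε : ℝ}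
    (hε : ε ≤ β / 2) (hf : f ∈ Shat g γ K y ε) (hf' : f' ∈ Shat g γ K y ε) :
    g^[K] (f.1 0) = g^[K] (f'.1 0) := by
  refine h1.iterate_eq_of_forall_dist_iterate_le hγ0 hγ1 hK fun s => ?_
  have := dist_iterate_coord_zero_le_of_mem_Shat hγ0 hγ1.le hK hf s
  have := dist_iterate_coord_zero_le_of_mem_Shat hγ0 hγ1.le hK hf' s
  linarith [dist_triangle_left (g^[s] (f.1 0)) (g^[s] (f'.1 0)) (g^[s] (y.1 0))]

end StableSets

theorem stmt1_general (g : Y → Y)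
    (β γ : ℝ) (K : ℕ) (hβ : 0 < β) (hK : 1 ≤ K) (hγ0 : 0 < γ) (hγ1 : γ < 1)
    (h1 : axiom1 g β K γ) :
    ∃ εhat : ℝ, 0 < εhat ∧ ∀ (y : InvLim g) (ε : ℝ), 0 < ε → ε ≤ εhat →
      IsTotallyDisconnected (Shat g γ K y ε) := by
  refine ⟨β / 2, half_pos hβ, fun y ε _ hε t hts ht => ?_⟩
  refine InvLim.subsingleton_of_isPreconnected h1 hβ hK ht ?_
  rintro _ ⟨_, ⟨f, hf, rfl⟩, rfl⟩ _ ⟨_, ⟨f', hf', rfl⟩, rfl⟩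
  exact h1.iterate_coord_zero_eq_of_mem_Shat hγ0.le hγ1 hK hε (hts hf) (hts hf')

/-- **Theorem A (totally disconnected stable sets).** If `(Y,d,g)` satisfies Axioms 1
and 2 then the inverse limit system has totally disconnected local stable sets. -/
theorem stmt1 (g : Y → Y) (hgc : Continuous g) (hgs : Function.Surjective g)
    (β γ : ℝ) (K : ℕ) (hβ : 0 < β) (hK : 1 ≤ K) (hγ0 : 0 < γ) (hγ1 : γ < 1)
    (h1 : axiom1 g β K γ) (h2 : axiom2 g β K γ) :
    ∃ εhat : ℝ, 0 < εhat ∧ ∀ (y : InvLim g) (ε : ℝ), 0 < ε → ε ≤ εhat →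
      IsTotallyDisconnected (Shat g γ K y ε) :=
  stmt1_general g β γ K hβ hK hγ0 hγ1 h1
end

section
/- Let (Y,d) be a compact metric space and g : Y → Y a continuous surjection satisfying Axioms 1 and 2 with constants β > 0, integer K ≥ 1 and 0 < γ < 1, and fix ε' with 0 < ε' ≤ β/2 such that d̂(x,y) ≤ ε' implies d̂(ĝ^{−n}(x), ĝ^{−n}(y)) ≤ β for n = 0, 1, …, 2K−1. If y, z ∈ Ŷ^u(x, ε') for some x ∈ Ŷ, then d̂(ĝ^{-1}(y), ĝ^{-1}(z)) ≤ γ · d̂(y, z). -/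
open Metric Function Topology

variable {Y : Type*} [MetricSpace Y] [CompactSpace Y]

/-!
On a local unstable set all coordinates of two points lie within `2ε' ≤ β` of each other, so
Axiom 1 applies along the whole backward orbit and gives `d'(ĝ^{-K} y, ĝ^{-K} z) ≤ γ^K d'(y, z)`.
Since `d̂(ĝ⁻¹ y, ĝ⁻¹ z) = γ ∑_{k=1}^{K} γ^{-k} d'(ĝ^{-k} y, ĝ^{-k} z)`, this bound on the last
term is exactly what makes the shifted sum at most `γ d̂(y, z)`.
-/

section InverseLimit

variable {X : Type*} {g : X → X}

lemma ghatInv_iterate_apply (k n : ℕ) (y : InvLim g) :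
    ((ghatInv g)^[k] y).1 n = y.1 (n + k) := by
  induction k generalizing y with
  | zero => rfl
  | succ k ih => exact ih (ghatInv g y)

lemma InvLim.iterate_apply_add (y : InvLim g) (j n : ℕ) : g^[j] (y.1 (n + j)) = y.1 n := by
  induction j with
  | zero => rfl
  | succ j ih => rw [Function.iterate_succ_apply, ← add_assoc, ← y.2 (n + j), ih]

variable [MetricSpace X] {γ : ℝ}

lemma dhat_ghatInv_le_of_dp_iterate_le (hγ : 0 < γ) {K : ℕ} {y z : InvLim g}
    (h : dp g γ ((ghatInv g)^[K] y) ((ghatInv g)^[K] z) ≤ γ ^ K * dp g γ y z) :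
    dhat g γ K (ghatInv g y) (ghatInv g z) ≤ γ * dhat g γ K y z := by
  set f : ℕ → ℝ := fun k => (γ ^ k)⁻¹ * dp g γ ((ghatInv g)^[k] y) ((ghatInv g)^[k] z)
  have hshift : dhat g γ K (ghatInv g y) (ghatInv g z) = γ * ∑ k ∈ Finset.range K, f (k + 1) := by
    rw [dhat, Finset.mul_sum]
    refine Finset.sum_congr rfl fun k _ => ?_
    simp only [f, ← Function.iterate_succ_apply, pow_succ, mul_inv]
    field_simp
  have hlast : f K ≤ f 0 := by
    calc f K = (γ ^ K)⁻¹ * dp g γ ((ghatInv g)^[K] y) ((ghatInv g)^[K] z) := rfl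
      _ ≤ (γ ^ K)⁻¹ * (γ ^ K * dp g γ y z) := by gcongr
      _ = f 0 := by simp [f, hγ.ne']
  have htelescope := (Finset.sum_range_succ f K).symm.trans (Finset.sum_range_succ' f K)
  have hdhat : dhat g γ K y z = ∑ k ∈ Finset.range K, f k := rfl
  rw [hshift, hdhat]
  exact mul_le_mul_of_nonneg_left (by linarith) hγ.le

variable [BoundedSpace X]

lemma bddAbove_range_pow_mul_dist (hγ0 : 0 ≤ γ) (hγ1 : γ ≤ 1) (x y : InvLim g) :
    BddAbove (Set.range fun n : ℕ => γ ^ n * dist (x.1 n) (y.1 n)) := by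
  refine ⟨diam (Set.univ : Set X), ?_⟩
  rintro _ ⟨n, rfl⟩
  calc γ ^ n * dist (x.1 n) (y.1 n) ≤ 1 * dist (x.1 n) (y.1 n) := by
        gcongr; exact pow_le_one₀ hγ0 hγ1
    _ ≤ diam Set.univ := by
        rw [one_mul]; exact dist_le_diam_of_mem BoundedSpace.bounded_univ trivial trivial

lemma pow_mul_dist_le_dp (hγ0 : 0 ≤ γ) (hγ1 : γ ≤ 1) (x y : InvLim g) (n : ℕ) :
    γ ^ n * dist (x.1 n) (y.1 n) ≤ dp g γ x y :=
  le_ciSup (bddAbove_range_pow_mul_dist hγ0 hγ1 x y) n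

lemma dist_le_dp (hγ0 : 0 ≤ γ) (hγ1 : γ ≤ 1) (x y : InvLim g) :
    dist (x.1 0) (y.1 0) ≤ dp g γ x y := by
  simpa using pow_mul_dist_le_dp hγ0 hγ1 x y 0

lemma dist_le_dhat (hγ0 : 0 ≤ γ) (hγ1 : γ ≤ 1) {K : ℕ} (hK : 0 < K) (x y : InvLim g) :
    dist (x.1 0) (y.1 0) ≤ dhat g γ K x y := by
  have hterm := Finset.single_le_sum
    (f := fun k => (γ ^ k)⁻¹ * dp g γ ((ghatInv g)^[k] x) ((ghatInv g)^[k] y))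
    (fun k _ => mul_nonneg (by positivity) (dist_nonneg.trans (dist_le_dp hγ0 hγ1 _ _)))
    (Finset.mem_range.mpr hK)
  simp only [pow_zero, inv_one, one_mul, Function.iterate_zero_apply] at hterm
  exact (dist_le_dp hγ0 hγ1 x y).trans hterm

lemma dist_le_two_mul_of_mem_Uhat (hγ0 : 0 ≤ γ) (hγ1 : γ ≤ 1) {K : ℕ} (hK : 0 < K)
    {x y z : InvLim g} {ε : ℝ} (hy : y ∈ Uhat g γ K x ε) (hz : z ∈ Uhat g γ K x ε) (m : ℕ) :
    dist (y.1 m) (z.1 m) ≤ 2 * ε := by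
  have hcoord (w : InvLim g) (hw : w ∈ Uhat g γ K x ε) : dist (x.1 m) (w.1 m) ≤ ε := by
    simpa [ghatInv_iterate_apply] using (dist_le_dhat hγ0 hγ1 hK _ _).trans (hw m)
  linarith [dist_triangle_left (y.1 m) (z.1 m) (x.1 m), hcoord y hy, hcoord z hz]

lemma dp_ghatInv_iterate_le {β : ℝ} {K : ℕ} (h1 : axiom1 g β K γ) (hγ0 : 0 ≤ γ) (hγ1 : γ ≤ 1)
    {y z : InvLim g} (hclose : ∀ m, dist (y.1 m) (z.1 m) ≤ β) :
    dp g γ ((ghatInv g)^[K] y) ((ghatInv g)^[K] z) ≤ γ ^ K * dp g γ y z := by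
  refine ciSup_le fun n => ?_
  have hax := h1 (y.1 (n + 2 * K)) (z.1 (n + 2 * K)) (hclose _)
  simp only [two_mul, ← add_assoc, Function.iterate_add_apply, InvLim.iterate_apply_add] at hax
  rw [ghatInv_iterate_apply, ghatInv_iterate_apply]
  calc γ ^ n * dist (y.1 (n + K)) (z.1 (n + K)) ≤ γ ^ n * (γ ^ K * dist (y.1 n) (z.1 n)) := by
        gcongr
    _ = γ ^ K * (γ ^ n * dist (y.1 n) (z.1 n)) := by ring
    _ ≤ γ ^ K * dp g γ y z := by gcongr; exact pow_mul_dist_le_dp hγ0 hγ1 y z n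

end InverseLimit

theorem stmt8_general (g : Y → Y)
    (β γ : ℝ) (K : ℕ) (hK : 1 ≤ K) (hγ0 : 0 < γ) (hγ1 : γ < 1)
    (h1 : axiom1 g β K γ)
    (ε' : ℝ) (hε'β : ε' ≤ β / 2) :
    ∀ x y z : InvLim g, y ∈ Uhat g γ K x ε' → z ∈ Uhat g γ K x ε' →
      dhat g γ K (ghatInv g y) (ghatInv g z) ≤ γ * dhat g γ K y z := by
  intro x y z hy hz
  have hclose (m : ℕ) : dist (y.1 m) (z.1 m) ≤ β := by
    linarith [dist_le_two_mul_of_mem_Uhat hγ0.le hγ1.le hK hy hz m]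
  exact dhat_ghatInv_le_of_dp_iterate_le hγ0 (dp_ghatInv_iterate_le h1 hγ0.le hγ1.le hclose)

/-- Corollary 3.5: contraction on local unstable sets under the inverse map. -/
theorem stmt8 (g : Y → Y) (hgc : Continuous g) (hgs : Function.Surjective g)
    (β γ : ℝ) (K : ℕ) (hβ : 0 < β) (hK : 1 ≤ K) (hγ0 : 0 < γ) (hγ1 : γ < 1)
    (h1 : axiom1 g β K γ) (h2 : axiom2 g β K γ)
    (ε' : ℝ) (hε'0 : 0 < ε') (hε'β : ε' ≤ β / 2)
    (hε' : ∀ x y : InvLim g, dhat g γ K x y ≤ ε' → ∀ n : ℕ, n < 2 * K →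
      dhat g γ K ((ghatInv g)^[n] x) ((ghatInv g)^[n] y) ≤ β) :
    ∀ x y z : InvLim g, y ∈ Uhat g γ K x ε' → z ∈ Uhat g γ K x ε' →
      dhat g γ K (ghatInv g y) (ghatInv g z) ≤ γ * dhat g γ K y z :=
  stmt8_general g β γ K hK hγ0 hγ1 h1 ε' hε'β
end
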